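/- arXiv:1601.05670 — 2 statements merged into one kernel-verified Lean document; each statement's English description precedes it below -/
import Mathlib

section
/- Let F = (F₁, F₂) : ℝ² → ℝ² be a C¹ vector field with F(x+1, y) = F(x, y) for all (x, y) (so F descends to the torus). Suppose that every point p = (x, 1/2) with F₂(p) = 0 is a fold point, i.e. F₁(p)·∂F₂/∂x(p) + F₂(p)·∂F₂/∂y(p) ≠ 0. Then the set {x ∈ [0, 1) : F₂(x, 1/2) = 0} is finite and has even cardinality. (The parity statement underlying Theorem 3.5/Theorem B: an odd number of fold singularities on Σ₂ forces a curve of singular points or a line of tangential singularities, i.e. cannot occur if every tangential point is a fold.) -/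
/-!
On `Σ₂` the fold condition at a zero of `g x = F₂ (x, 1/2)` reads `F₁ · g' ≠ 0`, so every zero
of the `1`-periodic `C¹` function `g` is simple. Simple zeros are isolated, hence finitely many
lie in a period, and `g` changes sign at each of them. Listing the zeros `z₀ < ⋯ < zₘ₋₁` of one
period and closing up cyclically with `zₘ = z₀ + 1`, the derivatives `εᵢ = g' zᵢ` therefore
satisfy `εᵢ εᵢ₊₁ < 0` for all `i` mod `m`. The product of these `m` negative numbers is
`(∏ εᵢ)² ≥ 0`, so `m` is even.
-/

open Set Filter Topology Function

theorem even_card_of_forall_mul_apply_neg {ι R : Type*} [Fintype ι] [CommRing R] [LinearOrder R]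
    [IsStrictOrderedRing R] (σ : Equiv.Perm ι) (ε : ι → R) (h : ∀ i, ε i * ε (σ i) < 0) :
    Even (Fintype.card ι) := by
  by_contra hodd
  rw [Nat.not_even_iff_odd] at hodd
  have hpos : 0 < ∏ i, -(ε i * ε (σ i)) := Finset.prod_pos fun i _ => neg_pos.2 (h i)
  rw [Finset.prod_neg, Finset.prod_mul_distrib, Equiv.prod_comp, Finset.card_univ,
    hodd.neg_one_pow] at hpos
  nlinarith [mul_self_nonneg (∏ i, ε i)]

theorem Function.Periodic.deriv {g : ℝ → ℝ} {c : ℝ} (hg : Periodic g c) : Periodic (deriv g) c :=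
  fun x => by simpa only [hg.funext] using (deriv_comp_add_const g c x).symm

section SimpleZeros

variable {g : ℝ → ℝ}

theorem isDiscrete_zeros_of_deriv_ne_zero (hsimple : ∀ x, g x = 0 → deriv g x ≠ 0) :
    IsDiscrete {x | g x = 0} := by
  refine isDiscrete_iff_nhdsNE.2 fun x hx => inf_principal_eq_bot.2 ?_
  exact (differentiableAt_of_deriv_ne_zero (hsimple x hx)).hasDerivAt.eventually_ne
    (hsimple x hx)

theorem finite_zeros_Ico (hg : Continuous g) (hsimple : ∀ x, g x = 0 → deriv g x ≠ 0)
    (a b : ℝ) : {x ∈ Ico a b | g x = 0}.Finite :=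
  ((isCompact_Icc.inter_right (isClosed_eq hg continuous_const)).finite
    ((isDiscrete_zeros_of_deriv_ne_zero hsimple).mono inter_subset_right)).subset
    fun _ hx => ⟨Ico_subset_Icc_self hx.1, hx.2⟩

theorem eventually_pos_mul_deriv_mul_sub {u : ℝ} (hu : g u = 0) (hu' : deriv g u ≠ 0) :
    ∀ᶠ y in 𝓝[≠] u, 0 < g y * deriv g u * (y - u) := by
  have hslope := hasDerivAt_iff_tendsto_slope.mp
    (differentiableAt_of_deriv_ne_zero hu').hasDerivAt
  filter_upwards [(hslope.mul_const (deriv g u)).eventually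
    (eventually_gt_nhds (mul_self_pos.2 hu')), self_mem_nhdsWithin] with y hy hyu
  rw [slope_def_field, hu, sub_zero] at hy
  have hyu' : y - u ≠ 0 := sub_ne_zero.2 hyu
  have : g y * deriv g u * (y - u) = g y / (y - u) * deriv g u * (y - u) ^ 2 := by
    field_simp
  rw [this]
  exact mul_pos hy (sq_pos_of_ne_zero hyu')

theorem pos_mul_of_forall_ne_zero {s : Set ℝ} (hs : IsPreconnected s) (hg : ContinuousOn g s)
    (hne : ∀ w ∈ s, g w ≠ 0) {y z : ℝ} (hy : y ∈ s) (hz : z ∈ s) : 0 < g y * g z := by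
  by_contra! h
  have h0 : (0 : ℝ) ∈ uIcc (g y) (g z) := by
    rcases mul_nonpos_iff.1 h with ⟨h1, h2⟩ | ⟨h1, h2⟩
    · exact mem_uIcc.2 (Or.inr ⟨h2, h1⟩)
    · exact mem_uIcc.2 (Or.inl ⟨h1, h2⟩)
  obtain ⟨w, hw, hw0⟩ := (isPreconnected_iff_ordConnected.1 (hs.image g hg)).uIcc_subset
    (mem_image_of_mem g hy) (mem_image_of_mem g hz) h0
  exact hne w hw hw0

theorem deriv_mul_deriv_neg_of_consecutive_zeros {u v : ℝ} (hg : ContinuousOn g (Ioo u v))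
    (huv : u < v) (hu : g u = 0) (hv : g v = 0) (hu' : deriv g u ≠ 0) (hv' : deriv g v ≠ 0)
    (hno : ∀ w ∈ Ioo u v, g w ≠ 0) : deriv g u * deriv g v < 0 := by
  obtain ⟨y, hy, hyI⟩ := (((eventually_pos_mul_deriv_mul_sub hu hu').filter_mono
    (nhdsGT_le_nhdsNE u)).and (Ioo_mem_nhdsGT huv)).exists
  obtain ⟨z, hz, hzI⟩ := (((eventually_pos_mul_deriv_mul_sub hv hv').filter_mono
    (nhdsLT_le_nhdsNE v)).and (Ioo_mem_nhdsLT huv)).exists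
  have hy' : 0 < g y * deriv g u := (pos_iff_pos_of_mul_pos hy).2 (sub_pos.2 hyI.1)
  have hz' : g z * deriv g v < 0 := neg_of_mul_pos_left hz (sub_nonpos.2 hzI.2.le)
  have hyz := pos_mul_of_forall_ne_zero isPreconnected_Ioo hg hno hyI hzI
  nlinarith [mul_pos hy' hyz]

theorem even_ncard_zeros_Ico_of_periodic {c : ℝ} (hg : Continuous g) (hper : Periodic g c)
    (hsimple : ∀ x, g x = 0 → deriv g x ≠ 0) : Even {x ∈ Ico 0 c | g x = 0}.ncard := by
  have hfin := finite_zeros_Ico hg hsimple 0 c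
  rw [ncard_eq_toFinset_card _ hfin]
  set s := hfin.toFinset
  rcases h : s.card with _ | n
  · exact Even.zero
  set z := s.orderEmbOfFin h
  have hz (i) : z i ∈ Ico 0 c ∧ g (z i) = 0 := hfin.mem_toFinset.1 (s.orderEmbOfFin_mem h i)
  have hzeros (w) (hw : w ∈ Ico 0 c) (hw0 : g w = 0) : ∃ j, z j = w := by
    rw [← mem_range, s.range_orderEmbOfFin h]
    exact hfin.mem_toFinset.2 ⟨hw, hw0⟩
  have hsimple' (i) : deriv g (z i) ≠ 0 := hsimple _ (hz i).2
  suffices hsign : ∀ i, deriv g (z i) * deriv g (z (finRotate (n + 1) i)) < 0 by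
    simpa using even_card_of_forall_mul_apply_neg _ _ hsign
  intro i
  induction i using Fin.lastCases with
  | last =>
    rw [finRotate_last, ← hper.deriv (z 0)]
    refine deriv_mul_deriv_neg_of_consecutive_zeros hg.continuousOn ?_ (hz _).2
      ((hper _).trans (hz 0).2) (hsimple' _) ((hper.deriv _).trans_ne (hsimple' 0)) ?_
    · linarith [(hz (Fin.last n)).1.2, (hz 0).1.1]
    rintro w ⟨hlw, hwz⟩ hgw
    rcases lt_or_ge w c with hwc | hwc
    · obtain ⟨j, rfl⟩ := hzeros w ⟨(hz _).1.1.trans hlw.le, hwc⟩ hgw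
      exact (z.lt_iff_lt.1 hlw).not_ge (Fin.le_last j)
    · obtain ⟨j, hj⟩ := hzeros (w - c) ⟨by linarith, by linarith [(hz 0).1.2]⟩
        (by rwa [← hper (w - c), sub_add_cancel])
      exact (z.lt_iff_lt.1 (by linarith : z j < z 0)).not_ge (Fin.zero_le j)
  | cast i =>
    rw [finRotate_apply, Fin.coeSucc_eq_succ]
    refine deriv_mul_deriv_neg_of_consecutive_zeros hg.continuousOn
      (z.strictMono Fin.castSucc_lt_succ) (hz _).2 (hz _).2 (hsimple' _) (hsimple' _) ?_
    rintro w ⟨hlw, hwu⟩ hgw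
    obtain ⟨j, rfl⟩ := hzeros w ⟨(hz _).1.1.trans hlw.le, hwu.trans (hz _).1.2⟩ hgw
    exact (Fin.castSucc_lt_iff_succ_le.1 (z.lt_iff_lt.1 hlw)).not_gt (z.lt_iff_lt.1 hwu)

end SimpleZeros

/-- Parity statement underlying Theorem 3.5 / Theorem B: for a `C¹` vector
field `F = (F₁, F₂)` on `ℝ²`, `1`-periodic in `x`, all of whose tangential
singularities on `Σ₂ = {y = 1/2}` are fold points, the set of tangential
singularities in one period is finite with even cardinality. -/
theorem fold_points_even (F : ℝ × ℝ → ℝ × ℝ)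
    (hF : ContDiff ℝ 1 F)
    (hper : ∀ x y : ℝ, F (x + 1, y) = F (x, y))
    (hfold : ∀ x : ℝ, (F (x, 1/2)).2 = 0 →
      (F (x, 1/2)).1 * fderiv ℝ (fun q => (F q).2) (x, 1/2) (1, 0) +
      (F (x, 1/2)).2 * fderiv ℝ (fun q => (F q).2) (x, 1/2) (0, 1) ≠ 0) :
    ({x ∈ Set.Ico (0 : ℝ) 1 | (F (x, 1/2)).2 = 0}).Finite ∧
      Even ({x ∈ Set.Ico (0 : ℝ) 1 | (F (x, 1/2)).2 = 0}).ncard := by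
  set g : ℝ → ℝ := fun x => (F (x, 1/2)).2
  have hG : Differentiable ℝ (fun q => (F q).2) := (hF.differentiable one_ne_zero).snd
  have hderiv (x : ℝ) : deriv g x = fderiv ℝ (fun q => (F q).2) (x, 1/2) (1, 0) :=
    ((hG _).hasFDerivAt.comp_hasDerivAt x ((hasDerivAt_id x).prodMk (hasDerivAt_const x _))).deriv
  have hsimple (x : ℝ) (hx : g x = 0) : deriv g x ≠ 0 := by
    have hfold_x := hfold x hx
    rw [show (F (x, 1/2)).2 = 0 from hx, zero_mul, add_zero] at hfold_x
    exact hderiv x ▸ right_ne_zero_of_mul hfold_x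
  have hg : Continuous g := hG.continuous.comp (continuous_id.prodMk continuous_const)
  have hperg : Periodic g 1 := fun x => congrArg Prod.snd (hper x (1/2))
  exact ⟨finite_zeros_Ico hg hsimple 0 1, even_ncard_zeros_Ico_of_periodic hg hperg hsimple⟩
end

section
/- Let f : ℝ → ℝ be continuously differentiable with f(x+1) = f(x) for all x, and suppose the set {x ∈ [0, 1) : f(x) = 0} is finite with odd cardinality. Then there exists a zero z of f with f'(z) = 0, i.e. at least one pseudo equilibrium is a non-hyperbolic (saddle-node) point. (Corollary 4.4: if the number of pseudo equilibria of the sliding vector field is odd, at least one is a saddle-node.) -/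
/-!
If every zero of `f` were hyperbolic, `f` would change sign at each of them. Starting from a
point `a` with `f a ≠ 0`, the sign of `f` would therefore flip an odd number of times on
`[a, a + 1]`, contradicting `f (a + 1) = f a`. Periodicity makes the number of zeros in
`[a, a + 1)` the same as in `[0, 1)`.
-/

open Set Filter Topology

theorem encard_sep_Ico_eq_of_periodic {α : Type*} [AddCommGroup α] [LinearOrder α]
    [IsOrderedAddMonoid α] [Archimedean α] {P : α → Prop} {p : α}
    (hP : Function.Periodic P p) (hp : 0 < p) (a b : α) :
    {x ∈ Ico a (a + p) | P x}.encard = {x ∈ Ico b (b + p) | P x}.encard := by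
  have hmod (c x : α) : P (toIcoMod hp c x) = P x := by
    rw [← self_sub_toIcoDiv_zsmul, hP.sub_zsmul_eq]
  refine encard_congr
    { toFun x := ⟨toIcoMod hp b x, toIcoMod_mem_Ico hp b x, (hmod b x).mpr x.2.2⟩
      invFun y := ⟨toIcoMod hp a y, toIcoMod_mem_Ico hp a y, (hmod a y).mpr y.2.2⟩
      left_inv x := ?_
      right_inv y := ?_ }
  · ext1; simp only [toIcoMod_toIcoMod, (toIcoMod_eq_self hp).2 x.2.1]
  · ext1; simp only [toIcoMod_toIcoMod, (toIcoMod_eq_self hp).2 y.2.1]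

theorem sep_Ico_eq_and_unique_of_eq_insert {α : Type*} [LinearOrder α] {P : α → Prop}
    {a b t z : α} {s : Finset α} (hs : {x ∈ Ico a b | P x} = ↑(insert z s)) (hat : a ≤ t)
    (hst : ∀ x ∈ s, x < t) (htz : t < z) :
    {x ∈ Ico a t | P x} = ↑s ∧ ∀ x ∈ Ico t b, P x → x = z := by
  have hmem (x : α) : (x ∈ Ico a b ∧ P x) ↔ x ∈ insert z s := Set.ext_iff.1 hs x
  have hzb : z < b := ((hmem z).2 (Finset.mem_insert_self z s)).1.2
  refine ⟨Set.ext fun x => ⟨fun ⟨⟨hax, hxt⟩, hPx⟩ => ?_, fun hxs => ?_⟩, fun x ⟨htx, hxb⟩ hPx => ?_⟩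
  · rcases Finset.mem_insert.1 ((hmem x).1 ⟨⟨hax, hxt.trans (htz.trans hzb)⟩, hPx⟩) with rfl | hxs
    · exact absurd (hxt.trans htz) (lt_irrefl x)
    · exact hxs
  · obtain ⟨⟨hax, -⟩, hPx⟩ := (hmem x).2 (Finset.mem_insert_of_mem hxs)
    exact ⟨⟨hax, hst x hxs⟩, hPx⟩
  · rcases Finset.mem_insert.1 ((hmem x).1 ⟨⟨hat.trans htx, hxb⟩, hPx⟩) with rfl | hxs
    · rfl
    · exact absurd htx (hst x hxs).not_ge

section SignChange

variable {f : ℝ → ℝ}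

theorem ContinuousOn.sign_eq_of_forall_ne_zero {u v : ℝ} (hf : ContinuousOn f (Icc u v))
    (huv : u ≤ v) (h : ∀ x ∈ Icc u v, f x ≠ 0) : SignType.sign (f u) = SignType.sign (f v) := by
  rw [← uIcc_of_le huv] at hf h
  by_contra hne
  have h0 : (0 : ℝ) ∈ uIcc (f u) (f v) := by
    rcases (h u left_mem_uIcc).lt_or_gt with hu | hu <;>
      rcases (h v right_mem_uIcc).lt_or_gt with hv | hv <;>
      simp_all [sign_neg, sign_pos, mem_uIcc, le_of_lt]
  obtain ⟨x, hx, hfx⟩ := intermediate_value_uIcc hf h0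
  exact h x hx hfx

theorem eventually_sign_eq_of_deriv_ne_zero {z : ℝ} (hd : deriv f z ≠ 0) (hz : f z = 0) :
    ∀ᶠ x in 𝓝 z, SignType.sign (f x) = SignType.sign (deriv f z) * SignType.sign (x - z) := by
  rcases hd.lt_or_gt with hneg | hpos
  · filter_upwards [eventually_nhdsWithin_sign_eq_of_deriv_neg hneg hz] with x hx
    rw [hx, sign_neg hneg, ← neg_sub, Left.sign_neg, neg_one_mul]
  · filter_upwards [eventually_nhdsWithin_sign_eq_of_deriv_pos hpos hz] with x hx
    rw [hx, sign_pos hpos, one_mul]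

theorem sign_eq_neg_of_unique_zero {u v z : ℝ} (hf : ContinuousOn f (Icc u v))
    (hz : z ∈ Ioo u v) (hfz : f z = 0) (hd : deriv f z ≠ 0)
    (huniq : ∀ x ∈ Icc u v, f x = 0 → x = z) :
    SignType.sign (f u) = -SignType.sign (f v) := by
  have hloc := eventually_sign_eq_of_deriv_ne_zero hd hfz
  obtain ⟨x₁, hx₁, hux₁, hx₁z⟩ :=
    ((hloc.filter_mono nhdsWithin_le_nhds).and (Ioo_mem_nhdsLT hz.1)).exists
  obtain ⟨x₂, hx₂, hzx₂, hx₂v⟩ :=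
    ((hloc.filter_mono nhdsWithin_le_nhds).and (Ioo_mem_nhdsGT hz.2)).exists
  have hleft : ∀ x ∈ Icc u x₁, f x ≠ 0 := fun x hx hfx => by
    have := huniq x ⟨hx.1, by linarith [hx.2, hz.2]⟩ hfx
    linarith [hx.2]
  have hright : ∀ x ∈ Icc x₂ v, f x ≠ 0 := fun x hx hfx => by
    have := huniq x ⟨by linarith [hx.1, hz.1], hx.2⟩ hfx
    linarith [hx.1]
  calc SignType.sign (f u) = SignType.sign (f x₁) :=
        (hf.mono (Icc_subset_Icc_right (by linarith [hz.2]))).sign_eq_of_forall_ne_zero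
          hux₁.le hleft
    _ = -SignType.sign (deriv f z) := by rw [hx₁, sign_neg (sub_neg.2 hx₁z), mul_neg_one]
    _ = -SignType.sign (f x₂) := by rw [hx₂, sign_pos (sub_pos.2 hzx₂), mul_one]
    _ = -SignType.sign (f v) := by
        rw [(hf.mono (Icc_subset_Icc_left (by linarith [hz.1]))).sign_eq_of_forall_ne_zero
          hx₂v.le hright]

theorem sign_eq_neg_one_pow_card_mul_of_zeros_eq {a b : ℝ} {s : Finset ℝ}
    (hf : ContinuousOn f (Icc a b)) (hab : a ≤ b) (ha : f a ≠ 0) (hb : f b ≠ 0)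
    (hs : {x ∈ Ico a b | f x = 0} = ↑s) (hd : ∀ x ∈ s, deriv f x ≠ 0) :
    SignType.sign (f b) = (-1) ^ s.card * SignType.sign (f a) := by
  induction s using Finset.induction_on_max generalizing b with
  | empty =>
    refine ((hf.sign_eq_of_forall_ne_zero hab fun x hx hfx => ?_).symm).trans (one_mul _).symm
    rcases hx.2.lt_or_eq with hxb | rfl
    · exact Finset.notMem_empty x ((Set.ext_iff.1 hs x).1 ⟨⟨hx.1, hxb⟩, hfx⟩)
    · exact hb hfx
  | insert z s hlt ih =>
    have hzs : z ∉ s := fun h => (hlt z h).false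
    obtain ⟨⟨haz, hzb⟩, hfz⟩ : z ∈ Ico a b ∧ f z = 0 :=
      (Set.ext_iff.1 hs z).2 (Finset.mem_insert_self z s)
    replace haz : a < z := haz.lt_of_ne fun h => ha (h ▸ hfz)
    have hev : ∀ᶠ t in 𝓝[<] z, t ∈ Ioo a z ∧ ∀ x ∈ s, x < t := by
      filter_upwards [Ioo_mem_nhdsLT haz,
        nhdsWithin_le_nhds ((s.eventually_all).2 fun x hx => eventually_gt_nhds (hlt x hx))]
        with t h1 h2 using ⟨h1, h2⟩
    obtain ⟨t, ⟨hat, htz⟩, hst⟩ := hev.exists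
    obtain ⟨hleft, hunique⟩ := sep_Ico_eq_and_unique_of_eq_insert hs hat.le hst htz
    have hft : f t ≠ 0 := fun h => htz.ne (hunique t ⟨le_rfl, htz.trans hzb⟩ h)
    have hright : ∀ x ∈ Icc t b, f x = 0 → x = z := fun x ⟨htx, hxb⟩ hfx =>
      hunique x ⟨htx, hxb.lt_of_ne fun h => hb (h ▸ hfx)⟩ hfx
    have hcross : SignType.sign (f t) = -SignType.sign (f b) :=
      sign_eq_neg_of_unique_zero (hf.mono (Icc_subset_Icc_left hat.le)) ⟨htz, hzb⟩ hfz
        (hd z (Finset.mem_insert_self z s)) hright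
    have hind : SignType.sign (f t) = (-1) ^ s.card * SignType.sign (f a) :=
      ih (hf.mono (Icc_subset_Icc_right (htz.trans hzb).le)) hat.le hft hleft
        fun x hx => hd x (Finset.mem_insert_of_mem hx)
    rw [Finset.card_insert_of_notMem hzs, pow_succ, mul_neg_one, neg_mul, ← hind, hcross, neg_neg]

end SignChange

/-- Corollary 4.4: if the number of pseudo equilibria of the `1`-periodic
sliding vector field `f` in one period is finite and odd, then at least one
pseudo equilibrium is a saddle-node (non-hyperbolic) point. -/
theorem odd_pseudo_equilibria_saddle_node (f : ℝ → ℝ)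
    (hf : ContDiff ℝ 1 f)
    (hper : ∀ x : ℝ, f (x + 1) = f x)
    (hfin : ({x ∈ Set.Ico (0 : ℝ) 1 | f x = 0}).Finite)
    (hodd : Odd ({x ∈ Set.Ico (0 : ℝ) 1 | f x = 0}).ncard) :
    ∃ z : ℝ, f z = 0 ∧ deriv f z = 0 := by
  by_contra! hyperbolic
  obtain ⟨a, ha⟩ : ∃ a, f a ≠ 0 := by
    obtain ⟨a, ha, hza⟩ := ((Ico_infinite (zero_lt_one' ℝ)).sdiff hfin).nonempty
    exact ⟨a, fun h => hza ⟨ha, h⟩⟩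
  have hcount : {x ∈ Ico a (a + 1) | f x = 0}.encard = {x ∈ Ico (0 : ℝ) 1 | f x = 0}.encard := by
    simpa using encard_sep_Ico_eq_of_periodic (Function.Periodic.comp hper (· = 0)) one_pos a 0
  have hfin' : {x ∈ Ico a (a + 1) | f x = 0}.Finite :=
    encard_lt_top_iff.1 (hcount ▸ hfin.encard_lt_top)
  have hsign := sign_eq_neg_one_pow_card_mul_of_zeros_eq
    hf.continuous.continuousOn (by linarith) ha (hper a ▸ ha) hfin'.coe_toFinset.symm
    fun x hx => hyperbolic x (hfin'.mem_toFinset.1 hx).2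
  rw [← ncard_eq_toFinset_card _ hfin', ncard_def, hcount, ← ncard_def, hodd.neg_one_pow,
    hper a, neg_one_mul, eq_comm, SignType.neg_eq_self_iff, sign_eq_zero_iff] at hsign
  exact ha hsign
end
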